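/- Non-constancy of the Cooper-pair-condensate density for non-pure phases: let u₁, u₂ ∈ (0,1), r₁, r₂ > 0, θ₁, θ₂ ∈ ℝ, and ν₁, ν₂ ∈ ℝ with ν₁ ≠ ν₂. Then the function t ↦ |u₁·r₁·exp(i(t·ν₁ + θ₁)) + u₂·r₂·exp(i(t·ν₂ + θ₂))|² of t ∈ ℝ is not a constant function. -/

import Mathlib

/-!
Expanding the square, the density equals
`(u₁r₁)² + (u₂r₂)² + 2 u₁r₁ u₂r₂ cos((ν₁ - ν₂) t + θ₁ - θ₂)`.
Since `ν₁ ≠ ν₂`, the cosine runs through both `1` and `-1`, so a constant density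
would force the interference coefficient `2 u₁r₁ u₂r₂ > 0` to vanish.
-/

open Complex in
theorem norm_mul_exp_add_mul_exp_sq (a b x y : ℝ) :
    ‖(a : ℂ) * exp (I * x) + b * exp (I * y)‖ ^ 2 = a ^ 2 + b ^ 2 + 2 * a * b * Real.cos (x - y) := by
  rw [Complex.sq_norm, normSq_apply, mul_comm I, mul_comm I, exp_mul_I, exp_mul_I, ← ofReal_cos,
    ← ofReal_sin, ← ofReal_cos, ← ofReal_sin]
  simp only [add_re, add_im, mul_re, mul_im, ofReal_re, ofReal_im, I_re, I_im]
  rw [Real.cos_sub]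
  nlinarith [Real.sin_sq_add_cos_sq x, Real.sin_sq_add_cos_sq y]

theorem eq_zero_of_forall_add_mul_cos_affine_eq {A c ω φ C : ℝ} (hω : ω ≠ 0)
    (hC : ∀ t, A + c * Real.cos (ω * t + φ) = C) : c = 0 := by
  have hcos (x : ℝ) : A + c * Real.cos x = C := by
    simpa only [mul_div_cancel₀ _ hω, sub_add_cancel] using hC ((x - φ) / ω)
  have h := (hcos 0).trans (hcos Real.pi).symm
  rw [Real.cos_zero, Real.cos_pi] at h
  linarith

theorem condensate_density_not_constant
    (u₁ u₂ r₁ r₂ θ₁ θ₂ ν₁ ν₂ : ℝ)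
    (hu₁ : u₁ ∈ Set.Ioo (0 : ℝ) 1) (hu₂ : u₂ ∈ Set.Ioo (0 : ℝ) 1)
    (hr₁ : 0 < r₁) (hr₂ : 0 < r₂) (hν : ν₁ ≠ ν₂) :
    ¬ ∃ C : ℝ, ∀ t : ℝ,
      (‖((u₁ : ℂ) * (r₁ : ℂ) * Complex.exp (Complex.I * ((t * ν₁ + θ₁ : ℝ) : ℂ))
        + (u₂ : ℂ) * (r₂ : ℂ) * Complex.exp (Complex.I * ((t * ν₂ + θ₂ : ℝ) : ℂ)))‖) ^ 2 = C := by
  rintro ⟨C, hC⟩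
  have hdensity (t : ℝ) : (u₁ * r₁) ^ 2 + (u₂ * r₂) ^ 2
      + 2 * (u₁ * r₁) * (u₂ * r₂) * Real.cos ((ν₁ - ν₂) * t + (θ₁ - θ₂)) = C := by
    have h := norm_mul_exp_add_mul_exp_sq (u₁ * r₁) (u₂ * r₂) (t * ν₁ + θ₁) (t * ν₂ + θ₂)
    rw [Complex.ofReal_mul, Complex.ofReal_mul, hC t] at h
    rw [h]
    ring_nf
  have hu₁ := hu₁.1
  have hu₂ := hu₂.1
  exact (by positivity : 0 < 2 * (u₁ * r₁) * (u₂ * r₂)).ne'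
    (eq_zero_of_forall_add_mul_cos_affine_eq (sub_ne_zero.mpr hν) hdensity)
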